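/- arXiv:1802.03920 — 5 statements merged into one kernel-verified Lean document; each statement's English description precedes it below -/
import Mathlib

section
/- For every prime p and integer d ≥ 2p-1, the minrank over F_p of the generalized Kneser graph K(d, 2p-1, {p-1}) is at most Σ_{i=0}^{p-1} C(d,i). -/
/-- A matrix `M` over a field `F` represents a simple graph `G` if all diagonal entries are
nonzero and entries at distinct non-adjacent pairs of vertices are zero. -/
def Represents {V F : Type*} [Field F] (G : SimpleGraph V) (M : Matrix V V F) : Prop :=
  (∀ v, M v v ≠ 0) ∧ ∀ u v : V, u ≠ v → ¬G.Adj u v → M u v = 0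

/-- The minrank of a simple graph `G` over a field `F`. -/
noncomputable def minrank (F : Type*) [Field F] {V : Type*} [Fintype V] [DecidableEq V]
    (G : SimpleGraph V) : ℕ :=
  sInf {r : ℕ | ∃ M : Matrix V V F, Represents G M ∧ M.rank = r}

/-- The generalized Kneser graph `K(d, s, T)`: vertices are the `s`-subsets of `[d]`, and two
distinct sets are adjacent iff the size of their intersection lies in `T`. -/
def kneser (d s : ℕ) (T : Set ℕ) : SimpleGraph {A : Finset (Fin d) // A.card = s} where
  Adj A B := A ≠ B ∧ (A.1 ∩ B.1).card ∈ T
  symm := ⟨fun A B h => ⟨h.1.symm, by rw [Finset.inter_comm]; exact h.2⟩⟩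
  loopless := ⟨fun A h => h.1 rfl⟩

/-!
Let `N` be the inclusion matrix between `(2p-1)`-sets and `(p-1)`-sets of `[d]`. The entry of
`N * Nᵀ` at `(A, B)` counts the `(p-1)`-subsets of `A ∩ B`, i.e. it is `C(|A ∩ B|, p-1)`.
Modulo `p` this is `1` when `|A ∩ B| = 2p-1` (Lucas) and `0` for every other
`|A ∩ B| < 2p-1` except `p-1`, so `N * Nᵀ` represents the graph, and its rank is at most the
number `C(d, p-1)` of columns of `N`.
-/

open Finset
open scoped Matrix

theorem minrank_le_rank_of_represents {F V : Type*} [Field F] [Fintype V] [DecidableEq V]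
    {G : SimpleGraph V} {M : Matrix V V F} (hM : Represents G M) : minrank F G ≤ M.rank :=
  Nat.sInf_le ⟨M, hM, rfl⟩

theorem Nat.choose_prime_add_modEq_one {p a : ℕ} [Fact p.Prime] (ha : a < p) :
    (p + a).choose a ≡ 1 [MOD p] := by
  have lucas := Choose.choose_modEq_choose_mod_mul_choose_div_nat (p := p) (n := p + a) (k := a)
  rwa [add_mod_left, add_div_left _ (Fact.out : p.Prime).pos, mod_eq_of_lt ha, div_eq_of_lt ha,
    choose_self, choose_zero_right, one_mul] at lucas

theorem natCast_choose_two_mul_sub_one_pred_eq_one (p : ℕ) [Fact p.Prime] :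
    (((2 * p - 1).choose (p - 1) : ℕ) : ZMod p) = 1 := by
  have hp : 0 < p := (Fact.out : p.Prime).pos
  rw [show 2 * p - 1 = p + (p - 1) by omega, ← Nat.cast_one (R := ZMod p),
    ZMod.natCast_eq_natCast_iff]
  exact Nat.choose_prime_add_modEq_one (by omega)

theorem natCast_choose_pred_eq_zero {p t : ℕ} [Fact p.Prime] (ht : t < 2 * p - 1)
    (htp : t ≠ p - 1) : ((t.choose (p - 1) : ℕ) : ZMod p) = 0 := by
  have hp : p.Prime := Fact.out
  rcases lt_or_gt_of_ne htp with hlt | hgt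
  · rw [Nat.choose_eq_zero_of_lt hlt, Nat.cast_zero]
  · exact (ZMod.natCast_eq_zero_iff _ _).mpr (hp.dvd_choose (by omega) (by omega) (by omega))

theorem Finset.card_inter_lt_of_ne {α : Type*} [DecidableEq α] {A B : Finset α}
    (hAB : A ≠ B) (hcard : #A = #B) : #(A ∩ B) < #A := by
  refine card_lt_card (inf_lt_left.mpr fun hsub => hAB ?_)
  exact eq_of_subset_of_card_le hsub hcard.ge

def inclusionMatrix (R : Type*) [Zero R] [One R] (α : Type*) [Fintype α] [DecidableEq α]
    (k : ℕ) : Matrix (Finset α) (powersetCard k (univ : Finset α)) R :=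
  fun A S => if S.1 ⊆ A then 1 else 0

section InclusionMatrix

variable (R : Type*) {α : Type*} [Fintype α] [DecidableEq α] (k : ℕ)

theorem Finset.filter_powersetCard_univ_subset (C : Finset α) :
    {S ∈ powersetCard k (univ : Finset α) | S ⊆ C} = powersetCard k C := by
  ext S
  simp only [mem_filter, mem_powersetCard, subset_univ, true_and, and_comm]

theorem inclusionMatrix_mul_transpose_apply [NonAssocSemiring R] (A B : Finset α) :
    (inclusionMatrix R α k * (inclusionMatrix R α k)ᵀ) A B = ((#(A ∩ B)).choose k : R) := by
  simp only [Matrix.mul_apply, Matrix.transpose_apply, inclusionMatrix, ite_mul, one_mul,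
    zero_mul, ← ite_and, ← subset_inter_iff]
  rw [sum_coe_sort (powersetCard k univ) (fun S => if S ⊆ A ∩ B then (1 : R) else 0),
    ← sum_filter, sum_const, filter_powersetCard_univ_subset, card_powersetCard, nsmul_one]

theorem rank_inclusionMatrix_mul_transpose_submatrix_le [CommRing R] [StrongRankCondition R]
    {ι : Type*} [Fintype ι] (f : ι → Finset α) :
    ((inclusionMatrix R α k * (inclusionMatrix R α k)ᵀ).submatrix f f).rank ≤
      (Fintype.card α).choose k :=
  calc _ ≤ (inclusionMatrix R α k * (inclusionMatrix R α k)ᵀ).rank :=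
        Matrix.rank_submatrix_le _ _ _
    _ ≤ Fintype.card (powersetCard k (univ : Finset α)) :=
        (Matrix.rank_mul_le_left _ _).trans (Matrix.rank_le_card_width _)
    _ = (Fintype.card α).choose k := by
        rw [Fintype.card_coe, card_powersetCard, card_univ]

end InclusionMatrix

theorem represents_kneser_inclusionMatrix_mul_transpose (p d : ℕ) [Fact p.Prime] :
    Represents (kneser d (2 * p - 1) ({p - 1} : Set ℕ))
      ((inclusionMatrix (ZMod p) (Fin d) (p - 1) *
        (inclusionMatrix (ZMod p) (Fin d) (p - 1))ᵀ).submatrix Subtype.val Subtype.val) := by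
  refine ⟨fun A => ?_, fun A B hAB hnadj => ?_⟩
  · rw [Matrix.submatrix_apply, inclusionMatrix_mul_transpose_apply, inter_self, A.2,
      natCast_choose_two_mul_sub_one_pred_eq_one]
    exact one_ne_zero
  · have hcard : #(A.1 ∩ B.1) ≠ p - 1 := fun h => hnadj ⟨hAB, h⟩
    have hlt : #(A.1 ∩ B.1) < 2 * p - 1 :=
      (card_inter_lt_of_ne (Subtype.coe_ne_coe.mpr hAB) (A.2.trans B.2.symm)).trans_eq A.2
    rw [Matrix.submatrix_apply, inclusionMatrix_mul_transpose_apply]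
    exact natCast_choose_pred_eq_zero hlt hcard

theorem minrank_kneser_special_le_general (p : ℕ) [Fact p.Prime] (d : ℕ) :
    minrank (ZMod p) (kneser d (2 * p - 1) ({p - 1} : Set ℕ)) ≤
      ∑ i ∈ Finset.range p, d.choose i := by
  have hp : 0 < p := (Fact.out : p.Prime).pos
  calc _ ≤ _ :=
        minrank_le_rank_of_represents (represents_kneser_inclusionMatrix_mul_transpose p d)
    _ ≤ d.choose (p - 1) := by
        simpa only [Fintype.card_fin] using
          rank_inclusionMatrix_mul_transpose_submatrix_le (ZMod p) (α := Fin d) (p - 1) Subtype.val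
    _ ≤ ∑ i ∈ range p, d.choose i :=
        single_le_sum (fun i _ => Nat.zero_le _) (mem_range.mpr (by omega))

/-- For every prime `p` and integer `d ≥ 2p - 1`, the minrank over `F_p` of the generalized
Kneser graph `K(d, 2p-1, {p-1})` is at most `∑_{i=0}^{p-1} C(d, i)`. -/
theorem minrank_kneser_special_le (p : ℕ) [Fact p.Prime] (d : ℕ) (hd : 2 * p - 1 ≤ d) :
    minrank (ZMod p) (kneser d (2 * p - 1) ({p - 1} : Set ℕ)) ≤
      ∑ i ∈ Finset.range p, d.choose i :=
  minrank_kneser_special_le_general p d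
end

section
/- Let t < s < d be integers with s^2 > dt and let T = {t}. Then the strict vector chromatic number of the graph K(d,s,{t}) is at most d(s-t)/(s^2 - dt). -/
/-- The strict vector chromatic number of a graph `G`: the infimum over `κ > 1` such that each
vertex can be assigned a unit vector with `⟪w u, w v⟫ = -1/(κ-1)` for every edge `{u, v}`. -/
noncomputable def strictVectorChromaticNumber {V : Type*} (G : SimpleGraph V) : ℝ :=
  sInf {κ : ℝ | 1 < κ ∧ ∃ (m : ℕ) (w : V → EuclideanSpace ℝ (Fin m)),
    (∀ v, ‖w v‖ = 1) ∧ ∀ u v : V, G.Adj u v → (inner ℝ (w u) (w v) : ℝ) = -(1 / (κ - 1))}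

/-!
Center the indicator vectors: `x_A = 1_A - (s/d)·𝟙` satisfies `⟪x_A, x_B⟫ = |A ∩ B| - s²/d`, so
all `x_A` have the same squared norm `s - s²/d`, and adjacent sets have inner product
`t - s²/d < 0`. Normalizing gives a strict vector coloring with `κ - 1 = (ds - s²)/(s² - dt)`.
-/

open Finset

section VectorColoring

variable {V : Type*} (G : SimpleGraph V)

theorem strictVectorChromaticNumber_le {κ : ℝ} (hκ : 1 < κ) {m : ℕ}
    (w : V → EuclideanSpace ℝ (Fin m)) (hw : ∀ v, ‖w v‖ = 1)
    (hadj : ∀ u v, G.Adj u v → inner ℝ (w u) (w v) = -(1 / (κ - 1))) :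
    strictVectorChromaticNumber G ≤ κ :=
  csInf_le ⟨1, fun _ hx => hx.1.le⟩ ⟨hκ, m, w, hw, hadj⟩

theorem strictVectorChromaticNumber_le_one_add_div {N c : ℝ} (hN : 0 < N) (hc : 0 < c)
    {m : ℕ} (x : V → EuclideanSpace ℝ (Fin m)) (hx : ∀ v, inner ℝ (x v) (x v) = N)
    (hadj : ∀ u v, G.Adj u v → inner ℝ (x u) (x v) = -c) :
    strictVectorChromaticNumber G ≤ 1 + N / c := by
  have hinner (u v : V) :
      inner ℝ ((Real.sqrt N)⁻¹ • x u) ((Real.sqrt N)⁻¹ • x v) = inner ℝ (x u) (x v) / N := by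
    rw [real_inner_smul_left, real_inner_smul_right, ← mul_assoc, ← mul_inv,
      Real.mul_self_sqrt hN.le, inv_mul_eq_div]
  refine strictVectorChromaticNumber_le G (lt_add_of_pos_right 1 (div_pos hN hc))
    (fun v => (Real.sqrt N)⁻¹ • x v) (fun v => ?_) (fun u v huv => ?_)
  · rw [← pow_eq_one_iff_of_nonneg (norm_nonneg _) two_ne_zero, ← real_inner_self_eq_norm_sq,
      hinner, hx, div_self hN.ne']
  · rw [hinner, hadj u v huv, add_sub_cancel_left]
    field_simp

end VectorColoring

section CenteredIndicator

variable {ι : Type*} [Fintype ι] [DecidableEq ι]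

noncomputable def centeredIndicator (A : Finset ι) (c : ℝ) : EuclideanSpace ℝ ι :=
  WithLp.toLp 2 fun i => (if i ∈ A then 1 else 0) - c

theorem inner_centeredIndicator (A B : Finset ι) (c : ℝ) :
    inner ℝ (centeredIndicator A c) (centeredIndicator B c) =
      #(A ∩ B) - c * #A - c * #B + Fintype.card ι * c ^ 2 := by
  have hterm (i : ι) :
      ((if i ∈ B then (1 : ℝ) else 0) - c) * ((if i ∈ A then 1 else 0) - c) =
        (if i ∈ A ∩ B then 1 else 0) - c * (if i ∈ A then 1 else 0)
          - c * (if i ∈ B then 1 else 0) + c ^ 2 := by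
    by_cases hA : i ∈ A <;> by_cases hB : i ∈ B <;> simp [hA, hB] <;> ring
  simp only [centeredIndicator, PiLp.inner_apply, RCLike.inner_apply, conj_trivial, hterm,
    sum_add_distrib, sum_sub_distrib, ← mul_sum, sum_boole, filter_mem_eq_inter, univ_inter,
    sum_const, card_univ, nsmul_eq_mul]

theorem inner_centeredIndicator_of_card_eq {s : ℕ} {A B : Finset ι}
    (hA : #A = s) (hB : #B = s) :
    inner ℝ (centeredIndicator A (s / Fintype.card ι)) (centeredIndicator B (s / Fintype.card ι))
      = #(A ∩ B) - s ^ 2 / Fintype.card ι := by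
  rw [inner_centeredIndicator, hA, hB]
  rcases (Fintype.card ι).eq_zero_or_pos with h0 | hpos
  · simp [h0]
  · field_simp
    ring

end CenteredIndicator

theorem strictVectorChromaticNumber_kneser_le_general (d s t : ℕ) (hsd : s < d)
    (h : d * t < s ^ 2) :
    strictVectorChromaticNumber (kneser d s ({t} : Set ℕ)) ≤
      ((d : ℝ) * ((s : ℝ) - (t : ℝ))) / ((s : ℝ) ^ 2 - (d : ℝ) * (t : ℝ)) := by
  have hd : (0 : ℝ) < d := by exact_mod_cast (Nat.zero_le s).trans_lt hsd
  have hs : (0 : ℝ) < s := by exact_mod_cast Nat.pos_of_ne_zero (by rintro rfl; simp at h)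
  have hsd' : (s : ℝ) < d := by exact_mod_cast hsd
  have hdt : (d : ℝ) * t < s ^ 2 := by exact_mod_cast h
  let x (A : {A : Finset (Fin d) // A.card = s}) := centeredIndicator A.1 (s / d)
  have hx (A B : {A : Finset (Fin d) // A.card = s}) :
      inner ℝ (x A) (x B) = #(A.1 ∩ B.1) - s ^ 2 / d := by
    simpa using inner_centeredIndicator_of_card_eq A.2 B.2
  have hN : 0 < (s : ℝ) - s ^ 2 / d := by
    rw [sub_pos, div_lt_iff₀ hd]; nlinarith
  have hc : 0 < (s : ℝ) ^ 2 / d - t := by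
    rw [sub_pos, lt_div_iff₀ hd]; linarith
  calc strictVectorChromaticNumber (kneser d s {t})
      ≤ 1 + (s - s ^ 2 / d) / (s ^ 2 / d - t) :=
        strictVectorChromaticNumber_le_one_add_div _ hN hc x
          (fun A => by rw [hx, inter_self, A.2])
          (fun A B hAB => by rw [hx, hAB.2]; ring)
    _ = d * (s - t) / (s ^ 2 - d * t) := by
        have : (s : ℝ) ^ 2 - d * t ≠ 0 := by linarith
        field_simp
        ring

/-- For `t < s < d` with `s² > d·t`, the strict vector chromatic number of `K(d, s, {t})` is
at most `d(s - t)/(s² - d·t)`. -/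
theorem strictVectorChromaticNumber_kneser_le (d s t : ℕ) (hts : t < s) (hsd : s < d)
    (h : d * t < s ^ 2) :
    strictVectorChromaticNumber (kneser d s ({t} : Set ℕ)) ≤
      ((d : ℝ) * ((s : ℝ) - (t : ℝ))) / ((s : ℝ) ^ 2 - (d : ℝ) * (t : ℝ)) :=
  strictVectorChromaticNumber_kneser_le_general d s t hsd h
end

section
/- For every prime p and integer d ≥ 1, let G_1(d,p) be the graph whose vertices are the vectors v ∈ F_p^d with ⟨v,v⟩ ≠ 0, where two distinct vertices u, v are adjacent iff ⟨u,v⟩ ≠ 0. Then the minrank of G_1(d,p) over F_p equals d. -/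
/-- The graph `G₁(d, p)`: vertices are the non-self-orthogonal vectors of `F_p^d`, with two
distinct vertices adjacent iff they are not orthogonal. -/
def orthoGraph (d p : ℕ) : SimpleGraph {v : Fin d → ZMod p // ∑ i, v i * v i ≠ 0} where
  Adj u v := u ≠ v ∧ ∑ i, u.1 i * v.1 i ≠ 0
  symm := ⟨fun u v h => ⟨h.1.symm, by simpa [mul_comm] using h.2⟩⟩
  loopless := ⟨fun v h => h.1 rfl⟩

namespace Represents

variable {V F : Type*} [Field F] {G : SimpleGraph V}

theorem one [DecidableEq V] : Represents G (1 : Matrix V V F) :=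
  ⟨fun _ => by simp, fun _ _ huv _ => Matrix.one_apply_ne huv⟩

theorem submatrix_eq_diagonal {M : Matrix V V F} (hM : Represents G M) {ι : Type*}
    [DecidableEq ι] {s : ι → V} (hs : Function.Injective s)
    (hind : ∀ i j, i ≠ j → ¬G.Adj (s i) (s j)) :
    M.submatrix s s = Matrix.diagonal fun i => M (s i) (s i) := by
  ext i j
  rcases eq_or_ne i j with rfl | hij
  · simp
  · simp [hij, hM.2 _ _ (hs.ne hij) (hind i j hij)]

theorem card_le_rank [Fintype V] {M : Matrix V V F} (hM : Represents G M) {ι : Type*}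
    [Fintype ι] {s : ι → V} (hs : Function.Injective s)
    (hind : ∀ i j, i ≠ j → ¬G.Adj (s i) (s j)) :
    Fintype.card ι ≤ M.rank := by
  classical
  calc Fintype.card ι = Fintype.card {i // M (s i) (s i) ≠ 0} :=
        (Fintype.card_congr (Equiv.subtypeUnivEquiv fun i => hM.1 (s i))).symm
    _ = (M.submatrix s s).rank := by rw [hM.submatrix_eq_diagonal hs hind, Matrix.rank_diagonal]
    _ ≤ M.rank := M.rank_submatrix_le s s

end Represents

section minrank

variable {F V : Type*} [Field F] [Fintype V] [DecidableEq V] {G : SimpleGraph V}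

theorem minrank_le_rank {M : Matrix V V F} (hM : Represents G M) : minrank F G ≤ M.rank :=
  Nat.sInf_le ⟨M, hM, rfl⟩

theorem le_minrank {r : ℕ} (h : ∀ M : Matrix V V F, Represents G M → r ≤ M.rank) :
    r ≤ minrank F G :=
  le_csInf ⟨_, 1, Represents.one, rfl⟩ fun _ ⟨M, hM, hr⟩ => hr ▸ h M hM

end minrank

namespace orthoGraph

open scoped Matrix

variable (d p : ℕ)

def vertexMatrix : Matrix {v : Fin d → ZMod p // ∑ i, v i * v i ≠ 0} (Fin d) (ZMod p) :=
  Matrix.of fun v i => v.1 i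

theorem represents_gram [Fact p.Prime] :
    Represents (orthoGraph d p) (vertexMatrix d p * (vertexMatrix d p)ᵀ) := by
  refine ⟨fun v => by simpa [vertexMatrix, Matrix.mul_apply] using v.2, fun u v huv hadj => ?_⟩
  simpa [vertexMatrix, Matrix.mul_apply, orthoGraph, huv] using hadj

theorem rank_gram_le [Fact p.Prime] : (vertexMatrix d p * (vertexMatrix d p)ᵀ).rank ≤ d :=
  (Matrix.rank_mul_le_left _ _).trans <| (Matrix.rank_le_card_width _).trans_eq (Fintype.card_fin d)

variable [Nontrivial (ZMod p)]

def basisVertex (i : Fin d) : {v : Fin d → ZMod p // ∑ i, v i * v i ≠ 0} :=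
  ⟨Pi.single i 1, by simp [Pi.single_apply]⟩

theorem basisVertex_injective : Function.Injective (basisVertex d p) := fun i j hij => by
  simpa [basisVertex, Pi.single_apply, eq_comm] using congrFun (congrArg Subtype.val hij) j

theorem not_adj_basisVertex {i j : Fin d} (hij : i ≠ j) :
    ¬(orthoGraph d p).Adj (basisVertex d p i) (basisVertex d p j) := fun hadj =>
  hadj.2 (by simp [basisVertex, Pi.single_apply, hij.symm])

end orthoGraph

theorem minrank_orthoGraph_general (p : ℕ) [Fact p.Prime] (d : ℕ) :
    minrank (ZMod p) (orthoGraph d p) = d := by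
  refine le_antisymm ?_ (le_minrank fun M hM => ?_)
  · exact (minrank_le_rank (orthoGraph.represents_gram d p)).trans (orthoGraph.rank_gram_le d p)
  · simpa using hM.card_le_rank (orthoGraph.basisVertex_injective d p)
      fun _ _ => orthoGraph.not_adj_basisVertex d p

/-- For every prime `p` and `d ≥ 1`, the minrank of `G₁(d, p)` over `F_p` equals `d`. -/
theorem minrank_orthoGraph (p : ℕ) [Fact p.Prime] (d : ℕ) (hd : 1 ≤ d) :
    minrank (ZMod p) (orthoGraph d p) = d :=
  minrank_orthoGraph_general p d
end

section
/- For every prime p and integer d ≥ 1, the minrank over F_p of the graph G_2(d,p) on the self-orthogonal vectors of F_p^d (distinct vertices adjacent iff not orthogonal) is at least n / (C(d+p-2, p-1) + 1), where n is the number of self-orthogonal vectors in F_p^d. -/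
/-- The graph `G₂(d, p)`: vertices are the self-orthogonal vectors of `F_p^d`, with two
distinct vertices adjacent iff they are not orthogonal. -/
def selfOrthoGraph (d p : ℕ) : SimpleGraph {v : Fin d → ZMod p // ∑ i, v i * v i = 0} where
  Adj u v := u ≠ v ∧ ∑ i, u.1 i * v.1 i ≠ 0
  symm := ⟨fun u v h => ⟨h.1.symm, by simpa [mul_comm] using h.2⟩⟩
  loopless := ⟨fun v h => h.1 rfl⟩

/-!
If `M` represents `G₂(d, p)`, take its Hadamard product with `N u v = 1 - ⟪u, v⟫ ^ (p - 1)`.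
By Fermat, `N u v = 0` exactly when `u` and `v` are not orthogonal, so the product kills every
entry of `M` off the diagonal and keeps the diagonal (`⟪v, v⟫ = 0`): it is an invertible
diagonal matrix, of rank `n`. On the other hand, expanding `⟪u, v⟫ ^ (p - 1)` by the multinomial
theorem writes `N` as a sum of `C(d + p - 2, p - 1) + 1` rank-one matrices `a ⬝ bᵀ`, and
`M ⊙ (a ⬝ bᵀ) = diag a * M * diag b` has rank at most `rank M`.
-/

open Finset Matrix

namespace Matrix

lemma hadamard_vecMulVec {m n R : Type*} [Fintype m] [Fintype n] [DecidableEq m] [DecidableEq n]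
    [CommSemiring R] (M : Matrix m n R) (a : m → R) (b : n → R) :
    M ⊙ vecMulVec a b = diagonal a * M * diagonal b := by
  ext i j
  simp only [hadamard_apply, vecMulVec_apply, mul_diagonal, diagonal_mul]
  ring

variable {F m n ι : Type*} [Field F] [Fintype n]

lemma rank_add_le (A B : Matrix m n F) : (A + B).rank ≤ A.rank + B.rank := by
  rw [rank, rank, rank, mulVecLin_add]
  have h : LinearMap.range (A.mulVecLin + B.mulVecLin) ≤
      LinearMap.range A.mulVecLin ⊔ LinearMap.range B.mulVecLin := by
    rintro x ⟨y, rfl⟩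
    exact Submodule.mem_sup.2 ⟨_, ⟨y, rfl⟩, _, ⟨y, rfl⟩, rfl⟩
  exact (Submodule.finrank_mono h).trans (Submodule.finrank_add_le_finrank_add_finrank _ _)

lemma rank_sum_le (s : Finset ι) (f : ι → Matrix m n F) :
    (∑ i ∈ s, f i).rank ≤ ∑ i ∈ s, (f i).rank := by
  classical
  induction s using Finset.cons_induction with
  | empty => simp
  | cons a s ha ih =>
    rw [sum_cons, sum_cons]
    exact (rank_add_le _ _).trans (by gcongr)

lemma rank_hadamard_le_of_eq_sum_vecMulVec [Fintype m] {M N : Matrix m n F} {s : Finset ι}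
    {a : ι → m → F} {b : ι → n → F} (hN : N = ∑ i ∈ s, vecMulVec (a i) (b i)) :
    (M ⊙ N).rank ≤ #s * M.rank := by
  classical
  have hsum : M ⊙ N = ∑ i ∈ s, diagonal (a i) * M * diagonal (b i) := by
    simp only [← hadamard_vecMulVec]
    ext u v
    simp only [hN, hadamard_apply, Matrix.sum_apply, mul_sum]
  calc (M ⊙ N).rank ≤ ∑ i ∈ s, (diagonal (a i) * M * diagonal (b i)).rank :=
        hsum ▸ rank_sum_le _ _
    _ ≤ ∑ _i ∈ s, M.rank :=
        sum_le_sum fun i _ => (rank_mul_le_left _ _).trans (rank_mul_le_right _ _)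
    _ = #s * M.rank := by rw [sum_const, smul_eq_mul]

end Matrix

lemma dotProduct_pow_eq_sum_sym {α R : Type*} [Fintype α] [DecidableEq α] [CommSemiring R]
    (u v : α → R) (k : ℕ) :
    (u ⬝ᵥ v) ^ k =
      ∑ s : Sym α k, (s.val.countPerms : R) * (s.val.map u).prod * (s.val.map v).prod := by
  rw [dotProduct, sum_pow, sym_univ]
  refine sum_congr rfl fun s _ => ?_
  rw [Multiset.prod_map_mul, mul_assoc]

lemma exists_one_sub_dotProduct_pow_eq_sum_vecMulVec {V α R : Type*} [Fintype α]
    [DecidableEq α] [CommRing R] (f : V → α → R) (k : ℕ) :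
    ∃ a b : Option (Sym α k) → V → R,
      of (fun x y => 1 - (f x ⬝ᵥ f y) ^ k) = ∑ s, vecMulVec (a s) (b s) := by
  refine ⟨fun s => s.elim 1 fun s x => -(s.val.countPerms * (s.val.map (f x)).prod),
    fun s => s.elim 1 fun s y => (s.val.map (f y)).prod, ?_⟩
  ext x y
  simp only [of_apply, Fintype.sum_option, Matrix.sum_apply, Option.elim,
    vecMulVec_apply, Pi.one_apply, dotProduct_pow_eq_sum_sym, neg_mul, sum_neg_distrib, mul_one]
  ring

lemma exists_represents_rank_eq_minrank (F : Type*) [Field F] {V : Type*} [Fintype V]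
    [DecidableEq V] (G : SimpleGraph V) :
    ∃ M : Matrix V V F, Represents G M ∧ M.rank = minrank F G :=
  Nat.sInf_mem (s := {r | ∃ M : Matrix V V F, Represents G M ∧ M.rank = r})
    ⟨_, 1, ⟨fun v => by simp, fun u v huv _ => one_apply_ne huv⟩, rfl⟩

lemma Represents.card_le_rank_hadamard {V F : Type*} [Fintype V] [DecidableEq V] [Field F]
    {G : SimpleGraph V} {M N : Matrix V V F} (hM : Represents G M) (hN_diag : ∀ v, N v v ≠ 0)
    (hN_adj : ∀ u v, G.Adj u v → N u v = 0) : Fintype.card V ≤ (M ⊙ N).rank := by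
  classical
  have hdiag : M ⊙ N = diagonal fun v => M v v * N v v := by
    ext u v
    rcases eq_or_ne u v with rfl | huv
    · simp
    · by_cases hadj : G.Adj u v
      · simp [hN_adj u v hadj, huv]
      · simp [hM.2 u v huv hadj, huv]
  rw [hdiag, rank_diagonal]
  exact (Fintype.card_congr <|
    Equiv.subtypeUnivEquiv fun v => mul_ne_zero (hM.1 v) (hN_diag v)).ge

theorem minrank_selfOrthoGraph_ge_general (p : ℕ) [Fact p.Prime] (d : ℕ) :
    ((Fintype.card {v : Fin d → ZMod p // ∑ i, v i * v i = 0} : ℝ) /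
        (((d + p - 2).choose (p - 1) : ℝ) + 1)) ≤
      (minrank (ZMod p) (selfOrthoGraph d p) : ℝ) := by
  classical
  set V := {v : Fin d → ZMod p // ∑ i, v i * v i = 0}
  have hp : 2 ≤ p := (Fact.out : p.Prime).two_le
  obtain ⟨M, hM, hMrank⟩ := exists_represents_rank_eq_minrank (ZMod p) (selfOrthoGraph d p)
  obtain ⟨a, b, hN⟩ := exists_one_sub_dotProduct_pow_eq_sum_vecMulVec (fun v : V => v.1) (p - 1)
  have hN_diag (v : V) : 1 - (v.1 ⬝ᵥ v.1) ^ (p - 1) ≠ 0 := by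
    rw [show v.1 ⬝ᵥ v.1 = 0 from v.2, zero_pow (by omega), sub_zero]
    exact one_ne_zero
  have hN_adj (u v : V) (h : (selfOrthoGraph d p).Adj u v) :
      1 - (u.1 ⬝ᵥ v.1) ^ (p - 1) = 0 := by
    rw [ZMod.pow_card_sub_one_eq_one (show u.1 ⬝ᵥ v.1 ≠ 0 from h.2), sub_self]
  have hcard : Fintype.card V ≤
      ((d + p - 2).choose (p - 1) + 1) * minrank (ZMod p) (selfOrthoGraph d p) :=
    calc Fintype.card V ≤ (M ⊙ of fun u v : V => 1 - (u.1 ⬝ᵥ v.1) ^ (p - 1)).rank :=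
          hM.card_le_rank_hadamard hN_diag hN_adj
      _ ≤ #(univ : Finset (Option (Sym (Fin d) (p - 1)))) * M.rank :=
          rank_hadamard_le_of_eq_sum_vecMulVec hN
      _ = ((d + p - 2).choose (p - 1) + 1) * minrank (ZMod p) (selfOrthoGraph d p) := by
          rw [card_univ, Fintype.card_option, Sym.card_sym_eq_choose, Fintype.card_fin, hMrank,
            show d + (p - 1) - 1 = d + p - 2 by omega]
  rw [div_le_iff₀ (by positivity), mul_comm]
  exact_mod_cast hcard

/-- For every prime `p` and `d ≥ 1`, the minrank of `G₂(d, p)` over `F_p` is at least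
`n / (C(d + p - 2, p - 1) + 1)`, where `n` is the number of self-orthogonal vectors. -/
theorem minrank_selfOrthoGraph_ge (p : ℕ) [Fact p.Prime] (d : ℕ) (hd : 1 ≤ d) :
    ((Fintype.card {v : Fin d → ZMod p // ∑ i, v i * v i = 0} : ℝ) /
        (((d + p - 2).choose (p - 1) : ℝ) + 1)) ≤
      (minrank (ZMod p) (selfOrthoGraph d p) : ℝ) :=
  minrank_selfOrthoGraph_ge_general p d
end

section
/- For a directed graph G, the minrank of G over any field F is at least the maximum number of vertices of an induced acyclic subgraph of G. -/
/-- A matrix `M` over a field `F` represents a directed graph with adjacency relation `Adj`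
if all diagonal entries are nonzero and `M u v = 0` whenever `u ≠ v` and `(u, v)` is not a
directed edge. -/
def RepresentsDi {V F : Type*} [Field F] (Adj : V → V → Prop) (M : Matrix V V F) : Prop :=
  (∀ v, M v v ≠ 0) ∧ ∀ u v : V, u ≠ v → ¬Adj u v → M u v = 0

/-- The minrank of a directed graph (given by its adjacency relation) over a field `F`. -/
noncomputable def minrankDi (F : Type*) [Field F] {V : Type*} [Fintype V] [DecidableEq V]
    (Adj : V → V → Prop) : ℕ :=
  sInf {r : ℕ | ∃ M : Matrix V V F, RepresentsDi Adj M ∧ M.rank = r}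

/-! If `S` induces no directed cycle, the edge relation restricted to `S` is well-founded. Given a
vanishing combination of the rows of a representing matrix indexed by `S`, pick a row `t` with
nonzero coefficient that is minimal for this relation: no other such row has an edge into `t`, so
column `t` of the combination is the single term `g t * M t t ≠ 0`. Hence these `|S|` rows are
linearly independent. -/

def AcyclicOn {V : Type*} (Adj : V → V → Prop) (S : Set V) : Prop :=
  ∀ (n : ℕ) (c : Fin (n + 1) → V), (∀ i, c i ∈ S) →
    (∀ i : Fin n, Adj (c i.castSucc) (c i.succ)) → ¬Adj (c (Fin.last n)) (c 0)

theorem Relation.TransGen.exists_walk {α : Type*} {r : α → α → Prop} {u v : α}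
    (h : Relation.TransGen r u v) :
    ∃ (n : ℕ) (c : Fin (n + 1) → α), c 0 = u ∧
      (∀ i : Fin n, r (c i.castSucc) (c i.succ)) ∧ r (c (Fin.last n)) v := by
  induction h with
  | single huv => exact ⟨0, fun _ => u, rfl, Fin.elim0, huv⟩
  | @tail b w _ hbw ih =>
    obtain ⟨n, c, hc0, hwalk, hlast⟩ := ih
    refine ⟨n + 1, Fin.snoc c b, by simpa using hc0, fun i => ?_, by simpa using hbw⟩
    induction i using Fin.lastCases with
    | last => simpa using hlast
    | cast j =>
      rw [Fin.succ_castSucc, Fin.snoc_castSucc, Fin.snoc_castSucc]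
      exact hwalk j

theorem AcyclicOn.wellFounded {V : Type*} {Adj : V → V → Prop} {S : Set V} [Finite S]
    (hS : AcyclicOn Adj S) : WellFounded fun a b : S => Adj a.1 b.1 := by
  have : Std.Irrefl (Relation.TransGen fun a b : S => Adj a.1 b.1) := ⟨fun a ha => by
    obtain ⟨n, c, hc0, hwalk, hlast⟩ := ha.exists_walk
    exact hS n (fun i => c i) (fun i => (c i).2) hwalk (hc0 ▸ hlast)⟩
  exact (Finite.wellFounded_of_trans_of_irrefl (Relation.TransGen fun a b : S => Adj a.1 b.1)).mono
    fun _ _ h => .single h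

theorem Matrix.linearIndependent_row_of_wellFounded {ι R : Type*} [Fintype ι] [Ring R]
    [NoZeroDivisors R] (M : Matrix ι ι R) {r : ι → ι → Prop} (hr : WellFounded r)
    (hdiag : ∀ i, M i i ≠ 0) (hoff : ∀ i j, i ≠ j → M i j ≠ 0 → r i j) :
    LinearIndependent R M.row := by
  refine (Fintype.linearIndependent_iff (v := M.row)).2 fun g hg => ?_
  by_contra! hsupp
  obtain ⟨t, ht, hmin⟩ := hr.has_min {i | g i ≠ 0} hsupp
  have hcol : ∑ i, g i * M i t = 0 := by simpa using congrFun hg t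
  rw [Finset.sum_eq_single t (fun i _ hit => ?_) (by simp)] at hcol
  · exact mul_ne_zero ht (hdiag t) hcol
  · by_contra hne
    exact hmin i (left_ne_zero_of_mul hne) (hoff i t hit (right_ne_zero_of_mul hne))

theorem RepresentsDi.card_le_rank {V F : Type*} [Field F] [Fintype V] {Adj : V → V → Prop}
    {M : Matrix V V F} (hM : RepresentsDi Adj M) {S : Finset V} (hS : AcyclicOn Adj S) :
    S.card ≤ M.rank := by
  have hrows : LinearIndependent F (M.submatrix (Subtype.val : S → V) Subtype.val).row :=
    Matrix.linearIndependent_row_of_wellFounded _ hS.wellFounded (fun i => hM.1 i)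
      fun i j hij hne => by_contra fun hadj => hne (hM.2 _ _ (Subtype.val_injective.ne hij) hadj)
  calc S.card = (M.submatrix (Subtype.val : S → V) Subtype.val).rank := by
        rw [hrows.rank_matrix, Fintype.card_coe]
    _ ≤ M.rank := M.rank_submatrix_le _ _

theorem representsDi_one {V F : Type*} [Field F] [DecidableEq V] (Adj : V → V → Prop) :
    RepresentsDi Adj (1 : Matrix V V F) :=
  ⟨fun v => by simp, fun _ _ huv _ => Matrix.one_apply_ne huv⟩

/-- The minrank of a directed graph over any field `F` is at least the number of vertices of
any induced acyclic subgraph (a vertex subset `S` inducing no directed cycle). -/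
theorem minrankDi_ge_acyclic (F : Type*) [Field F] {V : Type*} [Fintype V] [DecidableEq V]
    (Adj : V → V → Prop) (S : Finset V)
    (hacyclic : ∀ (n : ℕ) (c : Fin (n + 1) → V), (∀ i, c i ∈ S) →
      (∀ i : Fin n, Adj (c i.castSucc) (c i.succ)) → ¬Adj (c (Fin.last n)) (c 0)) :
    S.card ≤ minrankDi F Adj := by
  refine le_csInf ⟨_, 1, representsDi_one Adj, rfl⟩ ?_
  rintro _ ⟨M, hM, rfl⟩
  exact hM.card_le_rank hacyclic
end
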